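/- Let G be an infinite group with a subgroup K ≤ G and an element h ∈ G such that K is properly contained in hKh^{-1}. Let A be a set with at least two distinct elements 0 and 1, and consider the shift action of G on A^G defined by (g·x)(h') = x(g^{-1}h') for all g, h' ∈ G and x ∈ A^G. Let χ_K ∈ A^G be the indicator function of K (χ_K(g) = 1 if g ∈ K, and 0 otherwise). Then the stabilizer of χ_K under the shift action equals K, and consequently Aut_G(G·χ_K) is properly contained in End_G(G·χ_K), where G·χ_K is the G-orbit of χ_K. -/

import Mathlib

open scoped Classical

/-- The monoid of all `G`-equivariant transformations of `X`, as a submonoid of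
`Function.End X` (composition of functions). -/
def gEnd (G X : Type*) [Group G] [MulAction G X] : Submonoid (Function.End X) where
  carrier := {f | ∀ (g : G) (x : X), f (g • x) = g • f x}
  one_mem' := fun _ _ => rfl
  mul_mem' := fun {f₁ f₂} h₁ h₂ g x => by
    show f₁ (f₂ (g • x)) = g • f₁ (f₂ x)
    rw [h₂, h₁]

/-- The group of all bijective `G`-equivariant transformations of `X`, as a subgroup of
`Equiv.Perm X`. -/
def gAut (G X : Type*) [Group G] [MulAction G X] : Subgroup (Equiv.Perm X) where
  carrier := {f | ∀ (g : G) (x : X), f (g • x) = g • f x}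
  one_mem' := fun _ _ => rfl
  mul_mem' := fun {f₁ f₂} h₁ h₂ g x => by
    show f₁ (f₂ (g • x)) = g • f₁ (f₂ x)
    rw [h₂, h₁]
  inv_mem' := fun {f} hf g x => f.injective (by
    have hfi : ∀ y, f (f⁻¹ y) = y := fun y => Equiv.apply_symm_apply f y
    rw [hfi, hf, hfi])

/-- The conjugate subgroup `g K g⁻¹`. -/
def conjSub {G : Type*} [Group G] (g : G) (K : Subgroup G) : Subgroup G :=
  Subgroup.map (MulAut.conj g).toMonoidHom K

/-- The orbit of a point, as a `G`-invariant subset (`SubMulAction`). -/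
def orbitSub (G : Type*) {X : Type*} [Group G] [MulAction G X] (x : X) : SubMulAction G X where
  carrier := MulAction.orbit G x
  smul_mem' := fun g z hz => by
    obtain ⟨k, hk⟩ := hz
    exact ⟨g * k, by simp only [← hk, mul_smul]⟩

/-- The shift action of a group `G` on `A^G`: `(g • x)(h) = x(g⁻¹h)`. -/
instance shiftMulAction (G A : Type*) [Group G] : MulAction G (G → A) where
  smul g x := fun h => x (g⁻¹ * h)
  one_smul x := by funext h; show x (1⁻¹ * h) = x h; rw [inv_one, one_mul]
  mul_smul g g' x := by
    funext h
    show x ((g * g')⁻¹ * h) = x (g'⁻¹ * (g⁻¹ * h))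
    rw [mul_inv_rev, mul_assoc]

/-! If `G_x < h G_x h⁻¹`, right multiplication by `h` is well defined on `G / G_x ≅ G·x`, i.e.
`g • x ↦ (g * h) • x` is an equivariant self-map of the orbit, and it identifies `x` with
`s • x` for any `s ∈ h G_x h⁻¹ \ G_x`, so it is not injective. For the indicator function `χ_K`
of a subgroup one has `G_{χ_K} = K`, since `g • χ_K` takes the value `b` at `g`. -/

open MulAction Function

section Orbit

variable {G X : Type*} [Group G] [MulAction G X]

theorem smul_mem_orbitSub (x : X) (g : G) : g • x ∈ orbitSub G x :=
  mem_orbit x g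

theorem stabilizer_smul_eq_conjSub (h : G) (x : X) :
    stabilizer G (h • x) = conjSub h (stabilizer G x) :=
  stabilizer_smul_eq_stabilizer_map_conj h x

noncomputable def orbitRightMul (x : X) (h : G) : orbitSub G x → orbitSub G x :=
  fun z => ⟨(Classical.choose (z.2 : (z : X) ∈ orbit G x) * h) • x, smul_mem_orbitSub x _⟩

theorem orbitRightMul_smul {x : X} {h : G} (hx : stabilizer G x ≤ stabilizer G (h • x))
    (g : G) (hg : g • x ∈ orbitSub G x) :
    (orbitRightMul x h ⟨g • x, hg⟩ : X) = (g * h) • x := by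
  set g' := Classical.choose (hg : g • x ∈ orbit G x)
  have hg' : g' • x = g • x := Classical.choose_spec (hg : g • x ∈ orbit G x)
  have hmem : g⁻¹ * g' ∈ stabilizer G x := by
    rw [mem_stabilizer_iff, mul_smul, hg', inv_smul_smul]
  have hmem' := hx hmem
  rw [mem_stabilizer_iff, mul_smul, inv_smul_eq_iff] at hmem'
  change (g' * h) • x = (g * h) • x
  rw [mul_smul, hmem', mul_smul]

theorem orbitRightMul_mem_gEnd {x : X} {h : G} (hx : stabilizer G x ≤ stabilizer G (h • x)) :
    orbitRightMul x h ∈ gEnd G (orbitSub G x) := by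
  rintro g ⟨_, g₀, rfl⟩
  have hsmul : g • (⟨g₀ • x, smul_mem_orbitSub x g₀⟩ : orbitSub G x) =
      ⟨(g * g₀) • x, smul_mem_orbitSub x _⟩ :=
    Subtype.ext (mul_smul g g₀ x).symm
  apply Subtype.ext
  change (orbitRightMul x h (g • ⟨g₀ • x, smul_mem_orbitSub x g₀⟩) : X) =
    g • (orbitRightMul x h ⟨g₀ • x, smul_mem_orbitSub x g₀⟩ : X)
  rw [hsmul, orbitRightMul_smul hx, orbitRightMul_smul hx, mul_assoc, mul_smul]

theorem not_injective_orbitRightMul {x : X} {h : G}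
    (hx : stabilizer G x < stabilizer G (h • x)) : ¬Injective (orbitRightMul x h) := by
  obtain ⟨s, hs, hsx⟩ := SetLike.exists_of_lt hx
  intro hinj
  have hcollapse : orbitRightMul x h ⟨s • x, smul_mem_orbitSub x s⟩ =
      orbitRightMul x h ⟨(1 : G) • x, smul_mem_orbitSub x 1⟩ := by
    apply Subtype.ext
    rw [orbitRightMul_smul hx.le, orbitRightMul_smul hx.le, mul_smul, one_mul]
    exact hs
  apply hsx
  rw [mem_stabilizer_iff]
  simpa using congrArg Subtype.val (hinj hcollapse)

theorem exists_not_bijective_mem_gEnd_of_stabilizer_lt_conjSub {x : X} {h : G}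
    (hx : stabilizer G x < conjSub h (stabilizer G x)) :
    ∃ τ ∈ gEnd G (orbitSub G x), ¬Bijective τ := by
  rw [← stabilizer_smul_eq_conjSub] at hx
  exact ⟨orbitRightMul x h, orbitRightMul_mem_gEnd hx.le,
    fun hbij => not_injective_orbitRightMul hx hbij.1⟩

end Orbit

theorem shift_smul_apply {G A : Type*} [Group G] (g : G) (x : G → A) (k : G) :
    (g • x) k = x (g⁻¹ * k) :=
  rfl

theorem stabilizer_indicator_subgroup {G A : Type*} [Group G] (K : Subgroup G) {a b : A}
    (hab : a ≠ b) : stabilizer G (fun g => if g ∈ K then b else a : G → A) = K := by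
  ext g
  rw [mem_stabilizer_iff]
  constructor
  · intro hg
    have hg_at := congrFun hg g
    rw [shift_smul_apply, inv_mul_cancel] at hg_at
    by_contra hgK
    simp only [one_mem, if_true, hgK, if_false] at hg_at
    exact hab hg_at.symm
  · intro hg
    funext k
    rw [shift_smul_apply]
    simp only [K.mul_mem_cancel_left (inv_mem hg)]

theorem stmt18_general {G : Type*} [Group G] (K : Subgroup G) (h : G)
    (hK : K < conjSub h K) (A : Type*) (a b : A) (hab : a ≠ b) :
    MulAction.stabilizer G (fun g => if g ∈ K then b else a : G → A) = K ∧
    ∃ τ ∈ gEnd G ↑(orbitSub G (fun g => if g ∈ K then b else a : G → A)),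
      ¬Function.Bijective τ := by
  have hstab := stabilizer_indicator_subgroup K hab
  refine ⟨hstab, exists_not_bijective_mem_gEnd_of_stabilizer_lt_conjSub (h := h) ?_⟩
  rwa [hstab]

/-- If `K < hKh⁻¹` in an infinite group `G`, then for the shift action
of `G` on `A^G` (with `|A| ≥ 2`), the stabilizer of the indicator function `χ_K` equals
`K`, and `Aut_G(G·χ_K)` is properly contained in `End_G(G·χ_K)`. -/
theorem stmt18 {G : Type*} [Group G] [Infinite G] (K : Subgroup G) (h : G)
    (hK : K < conjSub h K) (A : Type*) (a b : A) (hab : a ≠ b) :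
    MulAction.stabilizer G (fun g => if g ∈ K then b else a : G → A) = K ∧
    ∃ τ ∈ gEnd G ↑(orbitSub G (fun g => if g ∈ K then b else a : G → A)),
      ¬Function.Bijective τ :=
  stmt18_general K h hK A a b hab
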